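/- Existence of auxiliary variables dominating the parabolic PINN loss (Theorem 3.4). For all parameters W₁∈ℝ^{M×(d+1)}, b₁∈ℝ^M, W₂∈ℝ^{M×M}, b₂∈ℝ^M, W₃∈ℝ^{1×M}, b₃∈ℝ, there exist auxiliary variables a₁, a₂ ∈ ℝ^{M×N}, d_{1i}, d_{2i} ∈ ℝ^{M×N} (i = 0,…,d), and q_i ∈ ℝ^{M×N} (i = 1,…,d) such that J^p_S ≤ J^p. In particular, the canonical choice a₁ = W₁X_T+b₁𝟙ᵀ, a₂ = W₂σ(a₁)+b₂𝟙ᵀ, d_{1i} = W₁(:,i+1)𝟙ᵀ, d_{2i} = W₂(σ'(a₁)*d_{1i}), q_i = W₂(σ''(a₁)*d_{1i}*d_{1i}) makes all penalty terms of J^p_S vanish and achieves J^p_S ≤ J^p. -/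

import Mathlib

open scoped BigOperators

noncomputable section

/-- Partial derivative `∂_{z_i} f` at `z`. -/
def pd {m : ℕ} (f : (Fin m → ℝ) → ℝ) (i : Fin m) (z : Fin m → ℝ) : ℝ :=
  fderiv ℝ f z (Pi.single i 1)

/-- Squared Euclidean norm of the `n`-th column of an `M × N` matrix. -/
def colSq {M N : ℕ} (A : Fin M → Fin N → ℝ) (n : Fin N) : ℝ := ∑ j, (A j n) ^ 2

/-- Squared Frobenius norm of an `M × N` matrix. -/
def froSq {M N : ℕ} (A : Fin M → Fin N → ℝ) : ℝ := ∑ n, colSq A n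

/-- Squared Frobenius norm of a row vector (`1 × N` matrix). -/
def vSq {N : ℕ} (v : Fin N → ℝ) : ℝ := ∑ n, (v n) ^ 2

/-- Entrywise sup-norm `|v|_∞` of a row vector. -/
def nsup {N : ℕ} (v : Fin N → ℝ) : ℝ := ⨆ n, |v n|

/-- Weighted squared norm `‖A‖_D²`, where `Dsq n = D(n,n)²` are the squared diagonal
entries of the diagonal weight matrix `D`. -/
def wSq {M N : ℕ} (Dsq : Fin N → ℝ) (A : Fin M → Fin N → ℝ) : ℝ := ∑ n, Dsq n * colSq A n

/-- The constant `C₁ = max{B_{σ'}·max{1,B_{σ'}}, C_{σ'}·max{1,B_{σ'},C_σ}}`. -/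
def constC1 (Cσ Cσ' Bσ' : ℝ) : ℝ :=
  max (Bσ' * max 1 Bσ') (Cσ' * max (max 1 Bσ') Cσ)

/-- The constant `C₂`. -/
def constC2 (Cσ' Cσ'' Bσ' Bσ'' : ℝ) : ℝ :=
  max (Bσ'' * max (max (max (max 1 Bσ') Cσ') (Bσ' ^ 2)) (Bσ' * Cσ'))
    (max 1 Cσ' * max Cσ' (Bσ' * Cσ''))

/-- The constant `C = max{1, 2C_σ², 2C_σ⁴, 5C₁², 14C₂²}`. -/
def constC (Cσ Cσ' Cσ'' Bσ' Bσ'' : ℝ) : ℝ :=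
  max (max (max (max 1 (2 * Cσ ^ 2)) (2 * Cσ ^ 4)) (5 * constC1 Cσ Cσ' Bσ' ^ 2))
    (14 * constC2 Cσ' Cσ'' Bσ' Bσ'' ^ 2)

/-- Data of the parabolic PINN model with a three-layer fully connected network:
activation `σ`, PDE coefficient `c`, time samples `T0` with `(t_n, x_n)` the feature
points, data `Y`, and network parameters.  The network input is `[t; x] ∈ ℝ^{d+1}`,
with coordinate `0` the time variable. -/
structure ParData (d M N : ℕ) where
  σ : ℝ → ℝ
  c : (Fin d → ℝ) → ℝ
  T0 : Fin N → ℝ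
  X : Fin d → Fin N → ℝ
  Y : Fin N → ℝ
  W1 : Fin M → Fin (d + 1) → ℝ
  b1 : Fin M → ℝ
  W2 : Fin M → Fin M → ℝ
  b2 : Fin M → ℝ
  W3 : Fin M → ℝ
  b3 : ℝ

/-- Auxiliary variables of the parabolic LySep model: `a₁, a₂`, the derivatives
`d_{1i}, d_{2i}` for `i = 0, …, d` (index `0` is the time derivative), and `q_i`
for `i = 1, …, d`. -/
structure ParAux (d M N : ℕ) where
  a1 : Fin M → Fin N → ℝ
  a2 : Fin M → Fin N → ℝ
  d1 : Fin (d + 1) → Fin M → Fin N → ℝ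
  d2 : Fin (d + 1) → Fin M → Fin N → ℝ
  q  : Fin d → Fin M → Fin N → ℝ

namespace ParData

variable {d M N : ℕ} (P : ParData d M N) (A : ParAux d M N)

/-- `σ'` -/
def σ' : ℝ → ℝ := deriv P.σ

/-- `σ''` -/
def σ'' : ℝ → ℝ := deriv (deriv P.σ)

/-- the `n`-th column of `X_T = [T₀; X]`, i.e. the point `(t_n, x_n)` -/
def z (n : Fin N) : Fin (d + 1) → ℝ := Fin.cons (P.T0 n) (fun i => P.X i n)

/-- the three-layer network `φ([t;x];θ) = W₃σ(W₂σ(W₁[t;x]+b₁)+b₂)+b₃` -/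
def phi (y : Fin (d + 1) → ℝ) : ℝ :=
  (∑ j, P.W3 j * P.σ ((∑ k, P.W2 j k * P.σ ((∑ i, P.W1 k i * y i) + P.b1 k)) + P.b2 j)) + P.b3

/-- `ψ_p(t,x) = t(‖x‖₂² − 1)φ(t,x;θ)` -/
def psiP (y : Fin (d + 1) → ℝ) : ℝ :=
  y 0 * ((∑ i : Fin d, (y i.succ) ^ 2) - 1) * P.phi y

/-- the `n`-th entry of the parabolic PINN residual
`(∂_tψ_p − Σ_i ∂_{x_i}(c·∂_{x_i}ψ_p))(X_T) − Y` -/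
def pinnRes (n : Fin N) : ℝ :=
  pd P.psiP 0 (P.z n)
    - (∑ i : Fin d,
        pd (fun y => P.c (fun i' => y i'.succ) * pd P.psiP i.succ y) i.succ (P.z n))
    - P.Y n

/-- the PINN loss `J^p` -/
def Jp : ℝ := (1 / (N : ℝ)) * ∑ n, (P.pinnRes n) ^ 2

/-- `c(X)` -/
def cX : Fin N → ℝ := fun n => P.c (fun i => P.X i n)

/-- `∂_{x_i} c(X)` -/
def dcX (i : Fin d) : Fin N → ℝ := fun n => pd P.c i (fun i' => P.X i' n)

/-- `X̂`, the row vector of `‖x_n‖₂²` -/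
def Xhat : Fin N → ℝ := fun n => ∑ i, (P.X i n) ^ 2

/-- `K^p = (X̂−1) − 2d·c(X)*T₀ − 2T₀*Σ_i ∂_{x_i}c(X)*X(i,:)` -/
def Kp : Fin N → ℝ :=
  fun n => (P.Xhat n - 1) - 2 * (d : ℝ) * P.cX n * P.T0 n
    - 2 * P.T0 n * ∑ i, P.dcX i n * P.X i n

/-- `K^p_0 = T₀*(X̂−1)` -/
def Kp0 : Fin N → ℝ := fun n => P.T0 n * (P.Xhat n - 1)

/-- `K^p_i = T₀*((X̂−1)*∂_{x_i}c(X) + 4X(i,:)*c(X))` for `i = 1, …, d` -/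
def Kpi (i : Fin d) : Fin N → ℝ :=
  fun n => P.T0 n * ((P.Xhat n - 1) * P.dcX i n + 4 * P.X i n * P.cX n)

/-- `K^p_i` for `i = 0, …, d` -/
def KpAll : Fin (d + 1) → Fin N → ℝ := Fin.cons P.Kp0 (fun i => P.Kpi i)

/-- `K̂^p = c(X)*T₀*(X̂−1)` -/
def Khat : Fin N → ℝ := fun n => P.cX n * P.T0 n * (P.Xhat n - 1)

/-- `‖W₃‖_F²` -/
def w3sq : ℝ := ∑ j, (P.W3 j) ^ 2

/-- `‖W₂‖_F²` -/
def w2sq : ℝ := ∑ j, ∑ k, (P.W2 j k) ^ 2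

/-- `‖W₁(:,i+1)‖₂²` (column `i` with the `0`-based time-first indexing) -/
def w1colSq (i : Fin (d + 1)) : ℝ := ∑ j, (P.W1 j i) ^ 2

/-- the `n`-th entry of the parabolic LySep residual
`K^p*(W₃σ(a₂)+b₃𝟙ᵀ) + K^p_0*(W₃(σ'(a₂)*d_{2,0})) − Σ_i K^p_i*(W₃(σ'(a₂)*d_{2i}))
− K̂^p*Σ_i W₃(σ''(a₂)*d_{2i}*d_{2i}+σ'(a₂)*q_i) − Y` -/
def sRes (n : Fin N) : ℝ :=
  P.Kp n * ((∑ j, P.W3 j * P.σ (A.a2 j n)) + P.b3)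
    + P.Kp0 n * (∑ j, P.W3 j * (P.σ' (A.a2 j n) * A.d2 0 j n))
    - (∑ i : Fin d, P.Kpi i n * ∑ j, P.W3 j * (P.σ' (A.a2 j n) * A.d2 i.succ j n))
    - P.Khat n *
        (∑ i : Fin d, ∑ j, P.W3 j *
          (P.σ'' (A.a2 j n) * A.d2 i.succ j n * A.d2 i.succ j n + P.σ' (A.a2 j n) * A.q i j n))
    - P.Y n

/-- constraint residual `W₁X_T + b₁𝟙ᵀ − a₁` -/
def Ra1 : Fin M → Fin N → ℝ := fun j n => (∑ i, P.W1 j i * P.z n i) + P.b1 j - A.a1 j n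

/-- constraint residual `W₂σ(a₁) + b₂𝟙ᵀ − a₂` -/
def Ra2 : Fin M → Fin N → ℝ := fun j n => (∑ k, P.W2 j k * P.σ (A.a1 k n)) + P.b2 j - A.a2 j n

/-- constraint residual `W₁(:,i+1)𝟙ᵀ − d_{1i}` for `i = 0, …, d` -/
def Rd1 (i : Fin (d + 1)) : Fin M → Fin N → ℝ := fun j n => P.W1 j i - A.d1 i j n

/-- constraint residual `W₂(σ'(a₁)*d_{1i}) − d_{2i}` for `i = 0, …, d` -/
def Rd2 (i : Fin (d + 1)) : Fin M → Fin N → ℝ :=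
  fun j n => (∑ k, P.W2 j k * (P.σ' (A.a1 k n) * A.d1 i k n)) - A.d2 i j n

/-- constraint residual `W₂(σ''(a₁)*d_{1i}*d_{1i}) − q_i` for `i = 1, …, d` -/
def Rq (i : Fin d) : Fin M → Fin N → ℝ :=
  fun j n =>
    (∑ k, P.W2 j k * (P.σ'' (A.a1 k n) * A.d1 i.succ k n * A.d1 i.succ k n)) - A.q i j n

/-- `D_{a₂}¹(n,n)²` -/
def Da2_1sq (n : Fin N) : ℝ :=
  nsup P.Kp ^ 2 + (∑ i : Fin (d + 1), nsup (P.KpAll i) ^ 2 * colSq (A.d2 i) n)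
    + nsup P.Khat ^ 2 * ∑ i : Fin d, colSq (A.q i) n

/-- `D_{a₂}^{2i}(n,n)²` -/
def Da2_2sq (i : Fin d) (n : Fin N) : ℝ := nsup P.Khat ^ 2 * colSq (A.d2 i.succ) n

/-- `D_{a₁}^{2i}(n,n)²` -/
def Da1_2sq (i : Fin d) (n : Fin N) : ℝ := nsup P.Khat ^ 2 * colSq (A.d1 i.succ) n

/-- `D_{a₁}^{3i}(n,n)²` -/
def Da1_3sq (i : Fin d) (n : Fin N) : ℝ := P.Da1_2sq A i n + P.Da2_2sq A i n

/-- `D_{a₁}¹(n,n)²` -/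
def Da1_1sq (n : Fin N) : ℝ :=
  P.Da2_1sq A n + (∑ i : Fin (d + 1), nsup (P.KpAll i) ^ 2 * colSq (A.d1 i) n)
    + ∑ i : Fin d, P.Da1_2sq A i n * colSq (A.d2 i.succ) n

/-- `D_{d_{1i}}²(n,n)²` -/
def Dd1_2sq (i : Fin d) (n : Fin N) : ℝ := nsup (P.Kpi i) ^ 2 + P.Da1_3sq A i n

/-- `D_{d_{2i}}¹(n,n)²` -/
def Dd2_1sq (i : Fin d) (n : Fin N) : ℝ := nsup (P.Kpi i) ^ 2 + P.Da2_2sq A i n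

/-- the parabolic LySep loss `J^p_S` with self-adaptive weights
`ω_{a₁}¹ = ω_{d_{1i}}² = ‖W₃‖²‖W₂‖²`, `ω_{a₁}^{2i} = ω_{a₂}^{2i} = ω_{a₁}¹‖W₁(:,i+1)‖₂²`,
`ω_{a₁}^{3i} = ω_{a₁}^{2i}‖W₂‖²`, `ω_{a₂}¹ = ω_{d_{2i}}¹ = ‖W₃‖²`,
`ω_{d10} = |K^p_0|_∞²ω_{a₁}¹`, `ω_{d20} = |K^p_0|_∞²ω_{a₂}¹`,
`ω_{d_{1i}}¹ = |K̂^p|_∞²(ω_{a₁}^{2i}+ω_{a₁}^{3i})`, `ω_{d_{2i}}² = |K̂^p|_∞²ω_{a₁}^{2i}`,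
`ω_{q_i} = |K̂^p|_∞²ω_{a₂}¹`, and `D_{d_{1i}}¹ = D_{d_{2i}}² = I`. -/
def JpS : ℝ :=
  (1 / (N : ℝ)) *
    ((∑ n, (P.sRes A n) ^ 2)
      + P.w3sq * P.w2sq * wSq (P.Da1_1sq A) (P.Ra1 A)
      + (∑ i : Fin d, P.w3sq * P.w2sq * P.w1colSq i.succ * wSq (P.Da1_2sq A i) (P.Ra1 A))
      + (∑ i : Fin d,
          P.w3sq * P.w2sq * P.w1colSq i.succ * P.w2sq * wSq (P.Da1_3sq A i) (P.Ra1 A))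
      + P.w3sq * wSq (P.Da2_1sq A) (P.Ra2 A)
      + (∑ i : Fin d, P.w3sq * P.w2sq * P.w1colSq i.succ * wSq (P.Da2_2sq A i) (P.Ra2 A))
      + nsup P.Kp0 ^ 2 * (P.w3sq * P.w2sq) * froSq (P.Rd1 A 0)
      + nsup P.Kp0 ^ 2 * P.w3sq * froSq (P.Rd2 A 0)
      + (∑ i : Fin d, nsup P.Khat ^ 2 *
          (P.w3sq * P.w2sq * P.w1colSq i.succ
            + P.w3sq * P.w2sq * P.w1colSq i.succ * P.w2sq) * froSq (P.Rd1 A i.succ))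
      + (∑ i : Fin d, P.w3sq * P.w2sq * wSq (P.Dd1_2sq A i) (P.Rd1 A i.succ))
      + (∑ i : Fin d, P.w3sq * wSq (P.Dd2_1sq A i) (P.Rd2 A i.succ))
      + (∑ i : Fin d,
          nsup P.Khat ^ 2 * (P.w3sq * P.w2sq * P.w1colSq i.succ) * froSq (P.Rd2 A i.succ))
      + (∑ i : Fin d, nsup P.Khat ^ 2 * P.w3sq * froSq (P.Rq A i)))

/-- canonical auxiliary variable `a₁ = W₁X_T + b₁𝟙ᵀ` -/
def cA1 : Fin M → Fin N → ℝ := fun j n => (∑ i, P.W1 j i * P.z n i) + P.b1 j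

/-- canonical auxiliary variable `a₂ = W₂σ(a₁) + b₂𝟙ᵀ` -/
def cA2 : Fin M → Fin N → ℝ := fun j n => (∑ k, P.W2 j k * P.σ (P.cA1 k n)) + P.b2 j

/-- canonical auxiliary variable `d_{1i} = W₁(:,i+1)𝟙ᵀ` for `i = 0, …, d` -/
def cD1 (i : Fin (d + 1)) : Fin M → Fin N → ℝ := fun j _ => P.W1 j i

/-- canonical auxiliary variable `d_{2i} = W₂(σ'(a₁)*d_{1i})` for `i = 0, …, d` -/
def cD2 (i : Fin (d + 1)) : Fin M → Fin N → ℝ :=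
  fun j n => ∑ k, P.W2 j k * (P.σ' (P.cA1 k n) * P.W1 k i)

/-- canonical auxiliary variable `q_i = W₂(σ''(a₁)*d_{1i}*d_{1i})` for `i = 1, …, d` -/
def cQ (i : Fin d) : Fin M → Fin N → ℝ :=
  fun j n => ∑ k, P.W2 j k * (P.σ'' (P.cA1 k n) * P.W1 k i.succ * P.W1 k i.succ)

/-- the canonical auxiliary variables -/
def canonAux : ParAux d M N := ⟨P.cA1, P.cA2, P.cD1, P.cD2, P.cQ⟩

end ParData


/-!
At the canonical auxiliary variables every constraint residual vanishes, so `J^p_S` reduces to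
its data term, and it remains to see that the LySep residual coincides with the PINN residual at
every sample. The canonical variables are the pre-activations of the network together with their
first and second partial derivatives along one input coordinate. Expanding
`∂_t ψ_p - Σ_i ∂_{x_i}(c ∂_{x_i} ψ_p)` for `ψ_p = t (‖x‖² - 1) φ` by the product and chain rules
and collecting the coefficients of `φ`, `∂_i φ` and `∂_i² φ` produces exactly `K^p`, `K^p_i` and
`K̂^p`, hence `J^p_S = J^p`. Partial derivatives are computed along coordinate lines
`t ↦ update y i t`.
-/

section PartialDeriv

open Function

theorem hasDerivAt_update_apply {ι : Type*} [DecidableEq ι] (y : ι → ℝ) (i l : ι) :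
    HasDerivAt (fun t => update y i t l) (Pi.single (M := fun _ => ℝ) i 1 l) (y i) :=
  hasDerivAt_pi.1 (hasDerivAt_update y i (y i)) l

variable {m : ℕ} {f : (Fin m → ℝ) → ℝ} {i : Fin m} {y : Fin m → ℝ}

theorem DifferentiableAt.hasDerivAt_comp_update (hf : DifferentiableAt ℝ f y) :
    HasDerivAt (fun t => f (update y i t)) (pd f i y) (y i) :=
  hf.hasFDerivAt.comp_hasDerivAt_of_eq (y i) (hasDerivAt_update y i (y i))
    (update_eq_self i y).symm

theorem pd_eq_of_hasDerivAt {a : ℝ} (hf : DifferentiableAt ℝ f y)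
    (h : HasDerivAt (fun t => f (update y i t)) a (y i)) : pd f i y = a :=
  hf.hasDerivAt_comp_update.unique h

end PartialDeriv

namespace ParData

open Function

variable {d M N : ℕ}

section Network

variable (P : ParData d M N)

/- At the sample `y = P.z n` these are the entries of the canonical auxiliary variables
`cA1`, `cA2`, `cD2 i` and `cQ`, which makes `sRes_canonAux` hold by `rfl`. -/

def a1 (k : Fin M) (y : Fin (d + 1) → ℝ) : ℝ := (∑ i, P.W1 k i * y i) + P.b1 k

def a2 (j : Fin M) (y : Fin (d + 1) → ℝ) : ℝ := (∑ k, P.W2 j k * P.σ (P.a1 k y)) + P.b2 j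

def da2 (i : Fin (d + 1)) (j : Fin M) (y : Fin (d + 1) → ℝ) : ℝ :=
  ∑ k, P.W2 j k * (P.σ' (P.a1 k y) * P.W1 k i)

def d2a2 (i : Fin (d + 1)) (j : Fin M) (y : Fin (d + 1) → ℝ) : ℝ :=
  ∑ k, P.W2 j k * (P.σ'' (P.a1 k y) * P.W1 k i * P.W1 k i)

def dphi (i : Fin (d + 1)) (y : Fin (d + 1) → ℝ) : ℝ :=
  ∑ j, P.W3 j * (P.σ' (P.a2 j y) * P.da2 i j y)

def d2phi (i : Fin (d + 1)) (y : Fin (d + 1) → ℝ) : ℝ :=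
  ∑ j, P.W3 j * (P.σ'' (P.a2 j y) * P.da2 i j y * P.da2 i j y + P.σ' (P.a2 j y) * P.d2a2 i j y)

variable (i : Fin (d + 1)) (y : Fin (d + 1) → ℝ)

theorem hasDerivAt_a1 (k : Fin M) :
    HasDerivAt (fun t => P.a1 k (update y i t)) (P.W1 k i) (y i) :=
  ((HasDerivAt.fun_sum (u := Finset.univ) fun l _ =>
    (hasDerivAt_update_apply y i l).const_mul (P.W1 k l)).add_const (P.b1 k)).congr_deriv
    (by simp [Pi.single_apply])

theorem hasDerivAt_a2 (hσ : Differentiable ℝ P.σ) (j : Fin M) :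
    HasDerivAt (fun t => P.a2 j (update y i t)) (P.da2 i j y) (y i) :=
  ((HasDerivAt.fun_sum (u := Finset.univ) fun k _ =>
    ((hσ _).hasDerivAt.comp (y i) (P.hasDerivAt_a1 i y k)).const_mul (P.W2 j k)).add_const
    (P.b2 j)).congr_deriv (by rw [update_eq_self]; rfl)

theorem hasDerivAt_da2 (hσ' : Differentiable ℝ P.σ') (j : Fin M) :
    HasDerivAt (fun t => P.da2 i j (update y i t)) (P.d2a2 i j y) (y i) :=
  (HasDerivAt.fun_sum (u := Finset.univ) fun k _ =>
    (((hσ' _).hasDerivAt.comp (y i) (P.hasDerivAt_a1 i y k)).mul_const (P.W1 k i)).const_mul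
      (P.W2 j k)).congr_deriv (by rw [update_eq_self]; rfl)

theorem hasDerivAt_phi (hσ : Differentiable ℝ P.σ) :
    HasDerivAt (fun t => P.phi (update y i t)) (P.dphi i y) (y i) :=
  ((HasDerivAt.fun_sum (u := Finset.univ) fun j _ =>
    ((hσ _).hasDerivAt.comp (y i) (P.hasDerivAt_a2 i y hσ j)).const_mul (P.W3 j)).add_const
    P.b3).congr_deriv (by rw [update_eq_self]; rfl)

theorem hasDerivAt_dphi (hσ : Differentiable ℝ P.σ) (hσ' : Differentiable ℝ P.σ') :
    HasDerivAt (fun t => P.dphi i (update y i t)) (P.d2phi i y) (y i) :=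
  (HasDerivAt.fun_sum (u := Finset.univ) fun j _ =>
    (((hσ' _).hasDerivAt.comp (y i) (P.hasDerivAt_a2 i y hσ j)).mul
      (P.hasDerivAt_da2 i y hσ' j)).const_mul (P.W3 j)).congr_deriv
    (by simp only [update_eq_self, comp_apply]; rfl)

end Network

def sphereFactor (y : Fin (d + 1) → ℝ) : ℝ := (∑ s : Fin d, y s.succ ^ 2) - 1

theorem sphereFactor_update_zero (y : Fin (d + 1) → ℝ) (t : ℝ) :
    sphereFactor (update y 0 t) = sphereFactor y := by
  simp [sphereFactor, Fin.succ_ne_zero]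

theorem hasDerivAt_sphereFactor (y : Fin (d + 1) → ℝ) (i : Fin d) :
    HasDerivAt (fun t => sphereFactor (update y i.succ t)) (2 * y i.succ) (y i.succ) :=
  ((HasDerivAt.fun_sum (u := Finset.univ) fun s _ =>
    (hasDerivAt_update_apply y i.succ s.succ).pow 2).sub_const 1).congr_deriv
    (by simp [Pi.single_apply, Fin.succ_inj])

theorem sphereFactor_z (P : ParData d M N) (n : Fin N) : sphereFactor (P.z n) = P.Xhat n - 1 := by
  simp [sphereFactor, Xhat, z]

variable {P : ParData d M N} (y : Fin (d + 1) → ℝ)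

theorem psiP_eq : P.psiP y = y 0 * sphereFactor y * P.phi y := rfl

theorem differentiable_psiP (hσ : Differentiable ℝ P.σ) : Differentiable ℝ P.psiP := by
  unfold psiP phi
  fun_prop

theorem pd_psiP_zero (hσ : Differentiable ℝ P.σ) :
    pd P.psiP 0 y = sphereFactor y * P.phi y + y 0 * sphereFactor y * P.dphi 0 y := by
  refine pd_eq_of_hasDerivAt (differentiable_psiP hσ y) ?_
  simp_rw [psiP_eq, sphereFactor_update_zero]
  exact (((hasDerivAt_update_apply y 0 0).mul_const (sphereFactor y)).fun_mul
    (P.hasDerivAt_phi 0 y hσ)).congr_deriv (by simp [update_eq_self])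

theorem pd_psiP_succ (hσ : Differentiable ℝ P.σ) (i : Fin d) :
    pd P.psiP i.succ y
      = 2 * y 0 * y i.succ * P.phi y + y 0 * sphereFactor y * P.dphi i.succ y := by
  refine pd_eq_of_hasDerivAt (differentiable_psiP hσ y) ?_
  simp_rw [psiP_eq]
  exact (((hasDerivAt_update_apply y i.succ 0).fun_mul (hasDerivAt_sphereFactor y i)).fun_mul
    (P.hasDerivAt_phi i.succ y hσ)).congr_deriv (by
      rw [update_eq_self, Pi.single_eq_of_ne (Fin.succ_ne_zero i).symm]; ring)

theorem differentiable_pd_psiP_succ (hσ : Differentiable ℝ P.σ) (hσ' : Differentiable ℝ P.σ')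
    (i : Fin d) : Differentiable ℝ (pd P.psiP i.succ) := by
  rw [funext (pd_psiP_succ · hσ i)]
  unfold phi dphi da2 a2 a1 sphereFactor
  fun_prop

theorem hasDerivAt_pd_psiP_succ (hσ : Differentiable ℝ P.σ) (hσ' : Differentiable ℝ P.σ')
    (i : Fin d) :
    HasDerivAt (fun t => pd P.psiP i.succ (update y i.succ t))
      (2 * y 0 * P.phi y + 4 * y 0 * y i.succ * P.dphi i.succ y
        + y 0 * sphereFactor y * P.d2phi i.succ y) (y i.succ) := by
  simp_rw [pd_psiP_succ _ hσ]
  have h0 := hasDerivAt_update_apply y i.succ 0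
  have hi := hasDerivAt_update_apply y i.succ i.succ
  exact ((((h0.const_mul 2).fun_mul hi).fun_mul (P.hasDerivAt_phi i.succ y hσ)).fun_add
    ((h0.fun_mul (hasDerivAt_sphereFactor y i)).fun_mul
      (P.hasDerivAt_dphi i.succ y hσ hσ'))).congr_deriv
    (by rw [update_eq_self, Pi.single_eq_of_ne (Fin.succ_ne_zero i).symm]; simp only [Pi.single_eq_same]; ring)

theorem pd_flux (hσ : Differentiable ℝ P.σ) (hσ' : Differentiable ℝ P.σ')
    (hc : Differentiable ℝ P.c) (i : Fin d) :
    pd (fun y => P.c (fun i' => y i'.succ) * pd P.psiP i.succ y) i.succ y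
      = pd P.c i (Fin.tail y)
          * (2 * y 0 * y i.succ * P.phi y + y 0 * sphereFactor y * P.dphi i.succ y)
        + P.c (Fin.tail y) * (2 * y 0 * P.phi y + 4 * y 0 * y i.succ * P.dphi i.succ y
          + y 0 * sphereFactor y * P.d2phi i.succ y) := by
  have hc_line : HasDerivAt (fun t => P.c (Fin.tail (update y i.succ t)))
      (pd P.c i (Fin.tail y)) (y i.succ) := by
    simp_rw [Fin.tail_update_succ]
    exact (hc _).hasDerivAt_comp_update
  have hpsi := differentiable_pd_psiP_succ hσ hσ' i
  refine pd_eq_of_hasDerivAt (by fun_prop)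
    ((hc_line.fun_mul (hasDerivAt_pd_psiP_succ y hσ hσ' i)).congr_deriv ?_)
  rw [update_eq_self, pd_psiP_succ _ hσ]

theorem sRes_canonAux (n : Fin N) :
    P.sRes P.canonAux n
      = P.Kp n * P.phi (P.z n) + P.Kp0 n * P.dphi 0 (P.z n)
        - (∑ i : Fin d, P.Kpi i n * P.dphi i.succ (P.z n))
        - P.Khat n * (∑ i : Fin d, P.d2phi i.succ (P.z n)) - P.Y n := rfl

theorem pinnRes_eq_sRes_canonAux (hσ : Differentiable ℝ P.σ) (hσ' : Differentiable ℝ P.σ')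
    (hc : Differentiable ℝ P.c) (n : Fin N) : P.pinnRes n = P.sRes P.canonAux n := by
  have hz0 : P.z n 0 = P.T0 n := rfl
  have hzs : ∀ i : Fin d, P.z n i.succ = P.X i n := fun _ => rfl
  have hc_z : P.c (Fin.tail (P.z n)) = P.cX n := rfl
  have hdc_z : ∀ i, pd P.c i (Fin.tail (P.z n)) = P.dcX i n := fun _ => rfl
  simp only [pinnRes, sRes_canonAux, pd_psiP_zero _ hσ, pd_flux _ hσ hσ' hc, hz0, hzs, hc_z,
    hdc_z, sphereFactor_z]
  have hflux : ∀ i : Fin d,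
      P.dcX i n * (2 * P.T0 n * P.X i n * P.phi (P.z n)
          + P.T0 n * (P.Xhat n - 1) * P.dphi i.succ (P.z n))
        + P.cX n * (2 * P.T0 n * P.phi (P.z n) + 4 * P.T0 n * P.X i n * P.dphi i.succ (P.z n)
          + P.T0 n * (P.Xhat n - 1) * P.d2phi i.succ (P.z n))
      = 2 * P.cX n * P.T0 n * P.phi (P.z n)
        + 2 * P.T0 n * P.phi (P.z n) * (P.dcX i n * P.X i n)
        + P.Kpi i n * P.dphi i.succ (P.z n) + P.Khat n * P.d2phi i.succ (P.z n) := fun i => by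
    unfold Kpi Khat
    ring
  rw [Finset.sum_congr rfl fun i _ => hflux i]
  simp only [Finset.sum_add_distrib, ← Finset.mul_sum, Finset.sum_const, Finset.card_univ,
    Fintype.card_fin, nsmul_eq_mul]
  unfold Kp Kp0
  ring

variable (P)

theorem Ra1_canonAux (j : Fin M) (n : Fin N) : P.Ra1 P.canonAux j n = 0 := sub_self _

theorem Ra2_canonAux (j : Fin M) (n : Fin N) : P.Ra2 P.canonAux j n = 0 := sub_self _

theorem Rd1_canonAux (i : Fin (d + 1)) (j : Fin M) (n : Fin N) : P.Rd1 P.canonAux i j n = 0 :=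
  sub_self _

theorem Rd2_canonAux (i : Fin (d + 1)) (j : Fin M) (n : Fin N) : P.Rd2 P.canonAux i j n = 0 :=
  sub_self _

theorem Rq_canonAux (i : Fin d) (j : Fin M) (n : Fin N) : P.Rq P.canonAux i j n = 0 := sub_self _

theorem JpS_eq_of_constraints {A : ParAux d M N} (ha1 : ∀ j n, P.Ra1 A j n = 0)
    (ha2 : ∀ j n, P.Ra2 A j n = 0) (hd1 : ∀ i j n, P.Rd1 A i j n = 0)
    (hd2 : ∀ i j n, P.Rd2 A i j n = 0) (hq : ∀ i j n, P.Rq A i j n = 0) :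
    P.JpS A = (1 / (N : ℝ)) * ∑ n, P.sRes A n ^ 2 := by
  simp [JpS, wSq, froSq, colSq, ha1, ha2, hd1, hd2, hq]

variable {P}

theorem JpS_canonAux (hσ : Differentiable ℝ P.σ) (hσ' : Differentiable ℝ P.σ')
    (hc : Differentiable ℝ P.c) : P.JpS P.canonAux = P.Jp := by
  rw [P.JpS_eq_of_constraints P.Ra1_canonAux P.Ra2_canonAux P.Rd1_canonAux P.Rd2_canonAux
    P.Rq_canonAux, Jp]
  simp only [pinnRes_eq_sRes_canonAux hσ hσ' hc]

end ParData

theorem parabolic_lysep_aux_exists_general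
    {d M N : ℕ}
    (P : ParData d M N)
    (hσ : ContDiff ℝ 2 P.σ) (hc : ContDiff ℝ 1 P.c) :
    (∃ A : ParAux d M N, P.JpS A ≤ P.Jp) ∧
    (∀ j n, P.Ra1 P.canonAux j n = 0) ∧
    (∀ j n, P.Ra2 P.canonAux j n = 0) ∧
    (∀ i j n, P.Rd1 P.canonAux i j n = 0) ∧
    (∀ i j n, P.Rd2 P.canonAux i j n = 0) ∧
    (∀ i j n, P.Rq P.canonAux i j n = 0) ∧
    P.JpS P.canonAux ≤ P.Jp := by
  have hJ : P.JpS P.canonAux = P.Jp := ParData.JpS_canonAux (hσ.differentiable two_ne_zero)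
    hσ.differentiable_deriv_two (hc.differentiable one_ne_zero)
  exact ⟨⟨P.canonAux, hJ.le⟩, P.Ra1_canonAux, P.Ra2_canonAux, P.Rd1_canonAux, P.Rd2_canonAux,
    P.Rq_canonAux, hJ.le⟩

/-- **Theorem 3.4** (existence of auxiliary variables dominating the parabolic PINN
loss).  For all network parameters there exist auxiliary variables with `J^p_S ≤ J^p`;
in particular, the canonical choice `a₁ = W₁X_T+b₁𝟙ᵀ`, `a₂ = W₂σ(a₁)+b₂𝟙ᵀ`,
`d_{1i} = W₁(:,i+1)𝟙ᵀ`, `d_{2i} = W₂(σ'(a₁)*d_{1i})`, `q_i = W₂(σ''(a₁)*d_{1i}*d_{1i})`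
makes all penalty terms of `J^p_S` vanish and achieves `J^p_S ≤ J^p`. -/
theorem parabolic_lysep_aux_exists
    {d M N : ℕ} (hd : 0 < d) (hM : 0 < M) (hN : 0 < N)
    (T : ℝ) (hT : 0 < T)
    (P : ParData d M N)
    (hsamples : ∀ n, P.T0 n ∈ Set.Icc 0 T)
    (hσ : ContDiff ℝ 2 P.σ) (hc : ContDiff ℝ 1 P.c) :
    (∃ A : ParAux d M N, P.JpS A ≤ P.Jp) ∧
    (∀ j n, P.Ra1 P.canonAux j n = 0) ∧
    (∀ j n, P.Ra2 P.canonAux j n = 0) ∧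
    (∀ i j n, P.Rd1 P.canonAux i j n = 0) ∧
    (∀ i j n, P.Rd2 P.canonAux i j n = 0) ∧
    (∀ i j n, P.Rq P.canonAux i j n = 0) ∧
    P.JpS P.canonAux ≤ P.Jp :=
  parabolic_lysep_aux_exists_general P hσ hc
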